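/- Let B be an open, fully expanded branch of a TC_SCI-tableau with root w₀⁻ : φ₀, let M_B be the branch structure constructed from B, and define V : FOR → U by: for atomic p, V(p) = u if u ∈ ML_B and there is w ∈ L_B with w : p on B and w ∼ u, and V(p) = w₀⁺ otherwise; and homomorphically V(¬ψ) = neg(V(ψ)), V(ψ → θ) = imp(V(ψ),V(θ)), V(ψ ≡ θ) = idn(V(ψ),V(θ)). Then V is well defined (the atomic clause determines a unique value) and V is a valuation in M_B. -/
import Mathlib


/-- SCI-formulas: atoms, negation, implication, and the identity connective. -/
inductive SCIForm : Type
  | atom : ℕ → SCIForm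
  | not : SCIForm → SCIForm
  | imp : SCIForm → SCIForm → SCIForm
  | idn : SCIForm → SCIForm → SCIForm
  deriving DecidableEq

/-- An SCI-structure over a carrier type `U`: a set of designated values and
operations interpreting ¬, →, ≡. -/
structure SCIStruct (U : Type) where
  D : Set U
  neg : U → U
  imp : U → U → U
  idn : U → U → U

/-- `M` is an SCI-model: `U` is non-empty, `D` is a proper subset of `U`, and the
three semantic conditions hold. -/
def IsSCIModel {U : Type} (M : SCIStruct U) : Prop :=
  Nonempty U ∧ M.D ≠ Set.univ ∧
  (∀ a : U, M.neg a ∈ M.D ↔ a ∉ M.D) ∧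
  (∀ a b : U, M.imp a b ∈ M.D ↔ (a ∉ M.D ∨ b ∈ M.D)) ∧
  (∀ a b : U, M.idn a b ∈ M.D ↔ a = b)

/-- A valuation in an SCI-structure: a homomorphism from formulas to `U`. -/
def IsValuation {U : Type} (M : SCIStruct U) (V : SCIForm → U) : Prop :=
  (∀ φ, V (SCIForm.not φ) = M.neg (V φ)) ∧
  (∀ φ ψ, V (SCIForm.imp φ ψ) = M.imp (V φ) (V ψ)) ∧
  (∀ φ ψ, V (SCIForm.idn φ ψ) = M.idn (V φ) (V ψ))

/-- A formula is SCI-satisfiable if its denotation is designated in some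
SCI-model under some valuation. -/
def SCISatisfiable (φ : SCIForm) : Prop :=
  ∃ (U : Type) (M : SCIStruct U) (V : SCIForm → U),
    IsSCIModel M ∧ IsValuation M V ∧ V φ ∈ M.D

/-- A formula is SCI-valid if its denotation is designated in every SCI-model
under every valuation. -/
def SCIValid (φ : SCIForm) : Prop :=
  ∀ (U : Type) (M : SCIStruct U) (V : SCIForm → U),
    IsSCIModel M → IsValuation M V → V φ ∈ M.D

/-- Labels: a Boolean polarity (`true` = the set L⁺, `false` = the set L⁻)
together with a natural number index; L⁺ and L⁻ are disjoint and countably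
infinite. -/
abbrev Label : Type := Bool × ℕ

/-- `w` belongs to L⁺. -/
def posL (w : Label) : Prop := w.1 = true

/-- `w` belongs to L⁻. -/
def negL (w : Label) : Prop := w.1 = false

/-- Expressions occurring on tableau branches: labelled formulas `w : φ`,
equalities `w = v`, inequalities `w ≠ v`, and the closure symbol ⊥. -/
inductive Node : Type
  | lf : Label → SCIForm → Node
  | eq : Label → Label → Node
  | neq : Label → Label → Node
  | bot : Node
  deriving DecidableEq

/-- The set of labels present on the branch `B` (occurring in a labelled formula). -/
def LB (B : Set Node) : Set Label := {w | ∃ φ, Node.lf w φ ∈ B}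

/-- The labels of L⁺ present on `B`. -/
def LBpos (B : Set Node) : Set Label := {w | w ∈ LB B ∧ posL w}

/-- The labels of L⁻ present on `B`. -/
def LBneg (B : Set Node) : Set Label := {w | w ∈ LB B ∧ negL w}

/-- `w ∼ v`: the equality expression `w = v` occurs on the branch `B`. -/
def simB (B : Set Node) (w v : Label) : Prop := Node.eq w v ∈ B

/-- The branch `B` is open: no closure rule of TC_SCI is applicable to it. -/
def OpenB (B : Set Node) : Prop :=
  (∀ w v : Label, ¬ (Node.eq w v ∈ B ∧ Node.neq w v ∈ B)) ∧
  (∀ w v : Label, posL w → negL v → Node.eq w v ∉ B)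

/-- The branch `B` is fully expanded: it is closed under all decomposition and
equality rules of TC_SCI. -/
structure SaturatedB (B : Set Node) : Prop where
  negP : ∀ w φ, posL w → Node.lf w (SCIForm.not φ) ∈ B →
    ∃ v, negL v ∧ Node.lf v φ ∈ B
  negN : ∀ w φ, negL w → Node.lf w (SCIForm.not φ) ∈ B →
    ∃ v, posL v ∧ Node.lf v φ ∈ B
  impP : ∀ w φ ψ, posL w → Node.lf w (SCIForm.imp φ ψ) ∈ B →
    (∃ v u, negL v ∧ negL u ∧ Node.lf v φ ∈ B ∧ Node.lf u ψ ∈ B) ∨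
    (∃ v u, negL v ∧ posL u ∧ Node.lf v φ ∈ B ∧ Node.lf u ψ ∈ B) ∨
    (∃ v u, posL v ∧ posL u ∧ Node.lf v φ ∈ B ∧ Node.lf u ψ ∈ B)
  impN : ∀ w φ ψ, negL w → Node.lf w (SCIForm.imp φ ψ) ∈ B →
    ∃ v u, posL v ∧ negL u ∧ Node.lf v φ ∈ B ∧ Node.lf u ψ ∈ B
  idnP : ∀ w φ ψ, posL w → Node.lf w (SCIForm.idn φ ψ) ∈ B →
    (∃ v u, posL v ∧ posL u ∧ Node.lf v φ ∈ B ∧ Node.lf u ψ ∈ B ∧ Node.eq v u ∈ B) ∨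
    (∃ v u, negL v ∧ negL u ∧ Node.lf v φ ∈ B ∧ Node.lf u ψ ∈ B ∧ Node.eq v u ∈ B)
  idnN : ∀ w φ ψ, negL w → Node.lf w (SCIForm.idn φ ψ) ∈ B →
    (∃ v u, posL v ∧ posL u ∧ Node.lf v φ ∈ B ∧ Node.lf u ψ ∈ B ∧ Node.neq v u ∈ B) ∨
    (∃ v u, posL v ∧ negL u ∧ Node.lf v φ ∈ B ∧ Node.lf u ψ ∈ B) ∨
    (∃ v u, negL v ∧ posL u ∧ Node.lf v φ ∈ B ∧ Node.lf u ψ ∈ B) ∨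
    (∃ v u, negL v ∧ negL u ∧ Node.lf v φ ∈ B ∧ Node.lf u ψ ∈ B ∧ Node.neq v u ∈ B)
  eqNeg : ∀ w v u y φ ψ, Node.lf w φ ∈ B → Node.lf v ψ ∈ B → Node.eq w v ∈ B →
    Node.lf u (SCIForm.not φ) ∈ B → Node.lf y (SCIForm.not ψ) ∈ B →
    Node.eq u y ∈ B
  eqImp : ∀ w v w' v' x z φ ψ χ θ,
    Node.lf w φ ∈ B → Node.lf v ψ ∈ B → Node.eq w v ∈ B →
    Node.lf w' χ ∈ B → Node.lf v' θ ∈ B → Node.eq w' v' ∈ B →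
    Node.lf x (SCIForm.imp φ χ) ∈ B → Node.lf z (SCIForm.imp ψ θ) ∈ B →
    Node.eq x z ∈ B
  eqIdn : ∀ w v w' v' x z φ ψ χ θ,
    Node.lf w φ ∈ B → Node.lf v ψ ∈ B → Node.eq w v ∈ B →
    Node.lf w' χ ∈ B → Node.lf v' θ ∈ B → Node.eq w' v' ∈ B →
    Node.lf x (SCIForm.idn φ χ) ∈ B → Node.lf z (SCIForm.idn ψ θ) ∈ B →
    Node.eq x z ∈ B
  ruleF : ∀ w v φ, Node.lf w φ ∈ B → Node.lf v φ ∈ B → Node.eq w v ∈ B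
  ruleSym : ∀ w v, Node.eq w v ∈ B → Node.eq v w ∈ B
  ruleTran : ∀ w v u, Node.eq w v ∈ B → Node.eq v u ∈ B → Node.eq w u ∈ B

/-- `MLp` consists of exactly one label from each ∼-equivalence class of the
positive labels present on `B`. -/
def MLchoiceP (B : Set Node) (MLp : Set Label) : Prop :=
  MLp ⊆ LBpos B ∧ ∀ w ∈ LBpos B, ∃! u, u ∈ MLp ∧ simB B w u

/-- `MLn` consists of exactly one label from each ∼-equivalence class of the
negative labels present on `B`, with the root label `w₀` chosen as a
representative. -/
def MLchoiceN (B : Set Node) (MLn : Set Label) (w₀ : Label) : Prop :=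
  MLn ⊆ LBneg B ∧ (∀ w ∈ LBneg B, ∃! u, u ∈ MLn ∧ simB B w u) ∧ w₀ ∈ MLn

/-- The set of designated values of the branch structure:
`D = ML_B⁺ ∪ {w₀⁺}` for a fresh positive label `w₀⁺`. -/
def DomD (MLp : Set Label) (wplus : Label) : Set Label := insert wplus MLp

/-- The universe of the branch structure: `U = D ∪ ML_B⁻`. -/
def DomU (MLp MLn : Set Label) (wplus : Label) : Set Label := DomD MLp wplus ∪ MLn

/-- `w` is (¬)-closed on `B`. -/
def NegClosed (B : Set Node) (ML : Set Label) (w : Label) : Prop :=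
  ∃ (ψ : SCIForm) (u v t : Label), u ∈ ML ∧ simB B w v ∧ simB B u t ∧
    Node.lf v ψ ∈ B ∧ Node.lf t (SCIForm.not ψ) ∈ B

/-- The first defining clause of the operation `neg` of the branch structure. -/
def NegRelFirst (B : Set Node) (w u : Label) : Prop :=
  ∃ (ψ : SCIForm) (v t : Label), simB B w v ∧ simB B u t ∧
    Node.lf v ψ ∈ B ∧ Node.lf t (SCIForm.not ψ) ∈ B

/-- The graph of the operation `neg` of the branch structure, given by its three
defining clauses. -/
def NegRel (B : Set Node) (ML DD UU : Set Label) (wplus wroot : Label)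
    (w u : Label) : Prop :=
  (u ∈ UU ∧ NegRelFirst B w u) ∨
  (¬ NegClosed B ML w ∧ w ∉ DD ∧ u = wplus) ∨
  (¬ (∃ u', u' ∈ UU ∧ NegRelFirst B w u') ∧ ¬ (¬ NegClosed B ML w ∧ w ∉ DD) ∧
    u = wroot)

/-- The pair `(w, v)` is (→)-closed on `B`. -/
def ImpClosed (B : Set Node) (ML : Set Label) (w v : Label) : Prop :=
  ∃ (ψ θ : SCIForm) (u t x y : Label), u ∈ ML ∧ simB B w t ∧ simB B v x ∧ simB B u y ∧
    Node.lf t ψ ∈ B ∧ Node.lf x θ ∈ B ∧ Node.lf y (SCIForm.imp ψ θ) ∈ B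

/-- The first defining clause of the operation `imp` of the branch structure. -/
def ImpRelFirst (B : Set Node) (w v u : Label) : Prop :=
  ∃ (ψ θ : SCIForm) (t x y : Label), simB B w t ∧ simB B v x ∧ simB B u y ∧
    Node.lf t ψ ∈ B ∧ Node.lf x θ ∈ B ∧ Node.lf y (SCIForm.imp ψ θ) ∈ B

/-- The graph of the operation `imp` of the branch structure, given by its three
defining clauses. -/
def ImpRel (B : Set Node) (ML DD UU : Set Label) (wplus wroot : Label)
    (w v u : Label) : Prop :=
  (u ∈ UU ∧ ImpRelFirst B w v u) ∨
  ((v = wplus ∨ (w = wplus ∧ v ∈ DD) ∨ (¬ ImpClosed B ML w v ∧ (w ∉ DD ∨ v ∈ DD))) ∧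
    u = wplus) ∨
  (¬ (∃ u', u' ∈ UU ∧ ImpRelFirst B w v u') ∧
    ¬ (v = wplus ∨ (w = wplus ∧ v ∈ DD) ∨ (¬ ImpClosed B ML w v ∧ (w ∉ DD ∨ v ∈ DD))) ∧
    u = wroot)

/-- The pair `(w, v)` is (≡)-closed on `B`. -/
def IdnClosed (B : Set Node) (ML : Set Label) (w v : Label) : Prop :=
  ∃ (ψ θ : SCIForm) (u t x y : Label), u ∈ ML ∧ simB B w t ∧ simB B v x ∧ simB B u y ∧
    Node.lf t ψ ∈ B ∧ Node.lf x θ ∈ B ∧ Node.lf y (SCIForm.idn ψ θ) ∈ B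

/-- The first defining clause of the operation `idn` of the branch structure. -/
def IdnRelFirst (B : Set Node) (w v u : Label) : Prop :=
  ∃ (ψ θ : SCIForm) (t x y : Label), simB B w t ∧ simB B v x ∧ simB B u y ∧
    Node.lf t ψ ∈ B ∧ Node.lf x θ ∈ B ∧ Node.lf y (SCIForm.idn ψ θ) ∈ B

/-- The graph of the operation `idn` of the branch structure, given by its three
defining clauses. -/
def IdnRel (B : Set Node) (ML DD UU : Set Label) (wplus wroot : Label)
    (w v u : Label) : Prop :=
  (u ∈ UU ∧ IdnRelFirst B w v u) ∨
  ((w = v ∧ (w = wplus ∨ ¬ IdnClosed B ML w v)) ∧ u = wplus) ∨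
  (¬ (∃ u', u' ∈ UU ∧ IdnRelFirst B w v u') ∧
    ¬ (w = v ∧ (w = wplus ∨ ¬ IdnClosed B ML w v)) ∧ u = wroot)

open Classical in
/-- The valuation read off from the branch. -/
noncomputable def Vaux (B : Set Node) (ML : Set Label) (wplus : Label)
    (fneg : Label → Label) (fimp fidn : Label → Label → Label) : SCIForm → Label
  | .atom n =>
      if h : ∃ u, u ∈ ML ∧ ∃ w, Node.lf w (SCIForm.atom n) ∈ B ∧ simB B w u
      then h.choose else wplus
  | .not ψ => fneg (Vaux B ML wplus fneg fimp fidn ψ)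
  | .imp ψ θ => fimp (Vaux B ML wplus fneg fimp fidn ψ) (Vaux B ML wplus fneg fimp fidn θ)
  | .idn ψ θ => fidn (Vaux B ML wplus fneg fimp fidn ψ) (Vaux B ML wplus fneg fimp fidn θ)

/-- let B be an open, fully expanded branch of a TC_SCI-tableau
with root w₀⁻ : φ₀, let M_B be the branch structure constructed from B (with
operations fneg, fimp, fidn realizing the defining clauses), and define V by
the atomic clause read off from B and homomorphically on compound formulas.
Then V is well defined (the atomic clause determines a unique value) and V is a
valuation in M_B (it maps formulas into U and commutes with the operations). -/
theorem stmt_11 (B : Set Node) (hopen : OpenB B) (hsat : SaturatedB B)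
    (w₀ : Label) (φ₀ : SCIForm) (hw₀ : negL w₀) (hroot : Node.lf w₀ φ₀ ∈ B)
    (MLp MLn : Set Label) (hMLp : MLchoiceP B MLp) (hMLn : MLchoiceN B MLn w₀)
    (wplus : Label) (hwplus : posL wplus) (hfresh : wplus ∉ LB B)
    (ML DD UU : Set Label) (hML : ML = MLp ∪ MLn) (hDD : DD = DomD MLp wplus)
    (hUU : UU = DomU MLp MLn wplus)
    (fneg : Label → Label) (fimp fidn : Label → Label → Label)
    (hfneg : ∀ w ∈ UU, fneg w ∈ UU ∧ NegRel B ML DD UU wplus w₀ w (fneg w))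
    (hfimp : ∀ w ∈ UU, ∀ v ∈ UU,
      fimp w v ∈ UU ∧ ImpRel B ML DD UU wplus w₀ w v (fimp w v))
    (hfidn : ∀ w ∈ UU, ∀ v ∈ UU,
      fidn w v ∈ UU ∧ IdnRel B ML DD UU wplus w₀ w v (fidn w v)) :
    (∀ n : ℕ, (∃ w, Node.lf w (SCIForm.atom n) ∈ B) →
      ∃! u, u ∈ ML ∧ ∃ w, Node.lf w (SCIForm.atom n) ∈ B ∧ simB B w u) ∧
    (∃ V : SCIForm → Label,
      (∀ n : ℕ,
        ((∃ w, Node.lf w (SCIForm.atom n) ∈ B) →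
          V (SCIForm.atom n) ∈ ML ∧
          ∃ w, Node.lf w (SCIForm.atom n) ∈ B ∧ simB B w (V (SCIForm.atom n))) ∧
        ((¬ ∃ w, Node.lf w (SCIForm.atom n) ∈ B) → V (SCIForm.atom n) = wplus)) ∧
      (∀ ψ : SCIForm, V ψ ∈ UU) ∧
      (∀ ψ : SCIForm, V (SCIForm.not ψ) = fneg (V ψ)) ∧
      (∀ ψ θ : SCIForm, V (SCIForm.imp ψ θ) = fimp (V ψ) (V θ)) ∧
      (∀ ψ θ : SCIForm, V (SCIForm.idn ψ θ) = fidn (V ψ) (V θ))) := by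
  classical
  have huniq : ∀ n : ℕ, (∃ w, Node.lf w (SCIForm.atom n) ∈ B) →
      ∃! u, u ∈ ML ∧ ∃ w, Node.lf w (SCIForm.atom n) ∈ B ∧ simB B w u := by
    intro n ⟨w, hw⟩
    have hwLB : w ∈ LB B := ⟨_, hw⟩
    rcases Bool.eq_false_or_eq_true w.1 with hpol | hpol
    · -- w positive
      obtain ⟨u, ⟨huM, husim⟩, hun⟩ := hMLp.2 w ⟨hwLB, hpol⟩
      refine ⟨u, ⟨hML ▸ Set.mem_union_left _ huM, w, hw, husim⟩, ?_⟩
      rintro u' ⟨hu'M, w', hw', hsim'⟩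
      have heq : simB B w u' := hsat.ruleTran _ _ _ (hsat.ruleF _ _ _ hw hw') hsim'
      rcases hML ▸ hu'M with h | h
      · exact hun u' ⟨h, heq⟩
      · exact absurd heq (hopen.2 w u' hpol (hMLn.1 h).2)
    · -- w negative
      obtain ⟨u, ⟨huM, husim⟩, hun⟩ := hMLn.2.1 w ⟨hwLB, hpol⟩
      refine ⟨u, ⟨hML ▸ Set.mem_union_right _ huM, w, hw, husim⟩, ?_⟩
      rintro u' ⟨hu'M, w', hw', hsim'⟩
      have heq : simB B w u' := hsat.ruleTran _ _ _ (hsat.ruleF _ _ _ hw hw') hsim'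
      rcases hML ▸ hu'M with h | h
      · exact absurd (hsat.ruleSym _ _ heq) (hopen.2 u' w (hMLp.1 h).2 hpol)
      · exact hun u' ⟨h, heq⟩
  have hMLUU : ML ⊆ UU := by
    subst hML hUU
    rintro u (h | h)
    · exact Set.mem_union_left _ (Set.mem_insert_of_mem _ h)
    · exact Set.mem_union_right _ h
  have hwplusUU : wplus ∈ UU := hUU ▸ Set.mem_union_left _ (Set.mem_insert _ _)
  refine ⟨huniq, Vaux B ML wplus fneg fimp fidn, ?_, ?_, fun ψ => rfl,
    fun ψ θ => rfl, fun ψ θ => rfl⟩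
  · intro n
    constructor
    · intro hex
      obtain ⟨u, hu, _⟩ := huniq n hex
      have h : ∃ u, u ∈ ML ∧ ∃ w, Node.lf w (SCIForm.atom n) ∈ B ∧ simB B w u := ⟨u, hu⟩
      simp only [Vaux, dif_pos h]
      exact h.choose_spec
    · intro hnex
      have h : ¬ ∃ u, u ∈ ML ∧ ∃ w, Node.lf w (SCIForm.atom n) ∈ B ∧ simB B w u := by
        rintro ⟨u, -, w, hw, -⟩; exact hnex ⟨w, hw⟩
      simp only [Vaux, dif_neg h]
  · intro ψ
    induction ψ with
    | atom n =>
      by_cases h : ∃ u, u ∈ ML ∧ ∃ w, Node.lf w (SCIForm.atom n) ∈ B ∧ simB B w u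
      · simp only [Vaux, dif_pos h]
        exact hMLUU h.choose_spec.1
      · simp only [Vaux, dif_neg h]
        exact hwplusUU
    | not ψ ih => exact (hfneg _ ih).1
    | imp ψ θ ih1 ih2 => exact (hfimp _ ih1 _ ih2).1
    | idn ψ θ ih1 ih2 => exact (hfidn _ ih1 _ ih2).1
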